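/- arXiv:2403.05560 — 5 statements merged into one kernel-verified Lean document; each statement's English description precedes it below -/
import Mathlib

section
/- Let n ≥ 2 be a natural number and let K₁, …, Kₙ ∈ B(H) with the composition K₂ ∘ ⋯ ∘ Kₙ nonzero. If the pair (Φ, Ψ) is a K₁-bi-g-frame for H with bounds A₁, B₁, then (Φ, Ψ) is a (K₁K₂⋯Kₙ)-bi-g-frame for H, with lower bound A₁/‖Kₙ*⋯K₂*‖² and upper bound B₁. -/
/-!
`(Φ, Ψ)` is a `K`-bi-`g`-frame for a complex Hilbert space `H` (with respect to a family
of complex Hilbert spaces `G i`) with bounds `0 < A ≤ B` if for every `x ∈ H` the series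
`∑ i, ⟪Φ i x, Ψ i x⟫` converges to a real number `S` with `A‖K*x‖² ≤ S ≤ B‖x‖²`.
-/

noncomputable section

/-- `(Φ, Ψ)` is a `K`-bi-`g`-frame with bounds `A`, `B`. -/
def IsKBiGFrame {ι : Type*} {H : Type*} [NormedAddCommGroup H] [InnerProductSpace ℂ H]
    [CompleteSpace H] {G : ι → Type*} [∀ i, NormedAddCommGroup (G i)]
    [∀ i, InnerProductSpace ℂ (G i)] [∀ i, CompleteSpace (G i)]
    (K : H →L[ℂ] H) (Φ Ψ : ∀ i, H →L[ℂ] G i) (A B : ℝ) : Prop :=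
  ∀ x : H, ∃ S : ℝ,
    HasSum (fun i => (inner ℂ (Φ i x) (Ψ i x) : ℂ)) (S : ℂ) ∧
    A * ‖ContinuousLinearMap.adjoint K x‖ ^ 2 ≤ S ∧ S ≤ B * ‖x‖ ^ 2

/-- **Corollary 3.9 (2).** Let `K 0, K 1, …, K n` (`n ≥ 1`, so at least two operators) be
bounded operators on `H` with the composition `K 1 ∘ ⋯ ∘ K n` nonzero. If `(Φ, Ψ)` is a
`K 0`-bi-`g`-frame with bounds `A₁, B₁`, then `(Φ, Ψ)` is a `(K 0 * K 1 * ⋯ * K n)`-bi-`g`-frame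
with lower bound `A₁ / ‖(K 1 ⋯ K n)*‖²` and upper bound `B₁`.  (Here multiplication of
continuous linear maps is composition, and `‖Kₙ* ⋯ K₁*‖ = ‖(K 1 ⋯ K n)*‖`.) -/
theorem isKBiGFrame_prod {ι : Type*} [Countable ι] {H : Type*} [NormedAddCommGroup H]
    [InnerProductSpace ℂ H] [CompleteSpace H] {G : ι → Type*} [∀ i, NormedAddCommGroup (G i)]
    [∀ i, InnerProductSpace ℂ (G i)] [∀ i, CompleteSpace (G i)]
    (n : ℕ) (hn : 1 ≤ n) (K : Fin (n + 1) → (H →L[ℂ] H)) (Φ Ψ : ∀ i, H →L[ℂ] G i)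
    (A₁ B₁ : ℝ) (hA : 0 < A₁) (hAB : A₁ ≤ B₁)
    (h : IsKBiGFrame (K 0) Φ Ψ A₁ B₁)
    (hK : (List.ofFn fun j : Fin n => K j.succ).prod ≠ 0) :
    IsKBiGFrame ((List.ofFn K).prod) Φ Ψ
      (A₁ / ‖ContinuousLinearMap.adjoint ((List.ofFn fun j : Fin n => K j.succ).prod)‖ ^ 2)
      B₁ := by
  set Q := (List.ofFn fun j : Fin n => K j.succ).prod with hQdef
  have hP : (List.ofFn K).prod = K 0 * Q := by
    rw [List.ofFn_succ, List.prod_cons]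
  have hQ' : ContinuousLinearMap.adjoint Q ≠ 0 := by
    intro h0
    apply hK
    have h1 := congrArg ContinuousLinearMap.adjoint h0
    simpa [ContinuousLinearMap.adjoint_adjoint] using h1
  have hQpos : (0:ℝ) < ‖ContinuousLinearMap.adjoint Q‖ := norm_pos_iff.mpr hQ'
  intro x
  obtain ⟨S, hS, h1, h2⟩ := h x
  refine ⟨S, hS, ?_, h2⟩
  have hbound : ‖ContinuousLinearMap.adjoint ((List.ofFn K).prod) x‖ ≤
      ‖ContinuousLinearMap.adjoint Q‖ * ‖ContinuousLinearMap.adjoint (K 0) x‖ := by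
    rw [hP, ContinuousLinearMap.mul_def, ContinuousLinearMap.adjoint_comp,
      ContinuousLinearMap.comp_apply]
    exact (ContinuousLinearMap.adjoint Q).le_opNorm _
  rw [div_mul_eq_mul_div, div_le_iff₀ (by positivity)]
  have hx0 : (0:ℝ) ≤ ‖ContinuousLinearMap.adjoint ((List.ofFn K).prod) x‖ := norm_nonneg _
  have hx1 : (0:ℝ) ≤ ‖ContinuousLinearMap.adjoint (K 0) x‖ := norm_nonneg _
  nlinarith [mul_le_mul_of_nonneg_left (pow_le_pow_left₀ hx0 hbound 2) hA.le,
    mul_le_mul_of_nonneg_right h1 (sq_nonneg ‖ContinuousLinearMap.adjoint Q‖)]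

end
end

section
/- Let (Φ, Ψ) be a bi-g-frame for H, let K ∈ B(H), and let S ∈ B(H) be the bi-g-frame operator of (Φ, Ψ), i.e. ⟨Sx, x⟩ = ∑_{i∈I} ⟨Φ_i x, Ψ_i x⟩ for all x ∈ H. Assume S is a positive (self-adjoint) operator, and let S^{1/2} denote its positive square root (so that (S^{1/2})* = S^{1/2}). Then (Φ, Ψ) is a K-bi-g-frame for H if and only if K = S^{1/2}U for some U ∈ B(H). -/
/-!
`(Φ, Ψ)` is a `K`-bi-`g`-frame for a complex Hilbert space `H` (with respect to a family
of complex Hilbert spaces `G i`) with bounds `0 < A ≤ B` if for every `x ∈ H` the series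
`∑ i, ⟪Φ i x, Ψ i x⟫` converges to a real number `S` with `A‖K*x‖² ≤ S ≤ B‖x‖²`.
-/

noncomputable section

/-- Douglas-type factorization: if `T` is self-adjoint and `‖K* x‖ ≤ c ‖T x‖` for all `x`,
then `K = T ∘L U` for some bounded `U`. -/
theorem douglas_factor {H : Type*} [NormedAddCommGroup H] [InnerProductSpace ℂ H]
    [CompleteSpace H] (K T : H →L[ℂ] H) (hT : ContinuousLinearMap.adjoint T = T) (c : ℝ)
    (hc : ∀ x : H, ‖ContinuousLinearMap.adjoint K x‖ ≤ c * ‖T x‖) :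
    ∃ U : H →L[ℂ] H, K = T ∘L U := by
  classical
  set Ka := ContinuousLinearMap.adjoint K with hKa
  set Tl : H →ₗ[ℂ] H := (T : H →ₗ[ℂ] H) with hTl
  have hker : LinearMap.ker Tl ≤ LinearMap.ker (Ka : H →ₗ[ℂ] H) := by
    intro x hx
    have hx' : T x = 0 := hx
    have := hc x
    simp only [hx', norm_zero, mul_zero] at this
    have : ‖Ka x‖ = 0 := le_antisymm this (norm_nonneg _)
    simpa [LinearMap.mem_ker] using norm_eq_zero.mp this
  -- V₀ on the range of T
  set R : Submodule ℂ H := LinearMap.range Tl with hR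
  set V₀ : ↥R →ₗ[ℂ] H :=
    ((LinearMap.ker Tl).liftQ (Ka : H →ₗ[ℂ] H) hker).comp
      (LinearMap.quotKerEquivRange Tl).symm.toLinearMap with hV₀
  have hV₀_apply : ∀ x : H, V₀ ⟨T x, LinearMap.mem_range_self Tl x⟩ = Ka x := by
    intro x
    show ((LinearMap.ker Tl).liftQ (Ka : H →ₗ[ℂ] H) hker)
      ((LinearMap.quotKerEquivRange Tl).symm ⟨Tl x, LinearMap.mem_range_self Tl x⟩) = Ka x
    rw [LinearMap.quotKerEquivRange_symm_apply_image, Submodule.mkQ_apply,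
      Submodule.liftQ_apply]
    rfl
  have hV₀_bound : ∀ y : ↥R, ‖V₀ y‖ ≤ c * ‖y‖ := by
    rintro ⟨y, hy⟩
    obtain ⟨x, rfl⟩ := hy
    show ‖V₀ ⟨T x, LinearMap.mem_range_self Tl x⟩‖ ≤ c * ‖T x‖
    rw [hV₀_apply x]
    exact hc x
  set Vc : ↥R →L[ℂ] H := V₀.mkContinuous c hV₀_bound with hVc
  set M : Submodule ℂ H := R.topologicalClosure with hM
  -- inclusion of R into M
  have hle : R ≤ M := R.le_topologicalClosure
  set e : ↥R →L[ℂ] ↥M := (Submodule.inclusion hle).mkContinuous 1 (by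
    intro y; rw [one_mul]; exact le_of_eq rfl) with he
  have he_coe : ∀ y : ↥R, ((e y : ↥M) : H) = (y : H) := fun y => rfl
  have h_e : IsUniformInducing e := by
    have : Isometry e := Isometry.of_dist_eq fun x y => rfl
    exact this.isUniformInducing
  have h_dense : DenseRange e := by
    intro y
    rw [closure_subtype]
    have h1 : (Subtype.val '' Set.range e : Set H) = (R : Set H) := by
      ext z
      constructor
      · rintro ⟨w, ⟨u, rfl⟩, rfl⟩
        exact u.2
      · intro hz
        exact ⟨e ⟨z, hz⟩, ⟨⟨z, hz⟩, rfl⟩, rfl⟩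
    rw [h1]
    exact y.2
  haveI : CompleteSpace ↥M := R.isClosed_topologicalClosure.completeSpace_coe
  set Vext : ↥M →L[ℂ] H := Vc.extend e with hVext
  set W : H →L[ℂ] H := Vext ∘L (M.orthogonalProjectionOnto : H →L[ℂ] ↥M) with hW
  have hWT : W ∘L T = Ka := by
    ext x
    have hmem : T x ∈ M := hle (LinearMap.mem_range_self Tl x)
    have h1 : M.orthogonalProjectionOnto (T x) = (⟨T x, hmem⟩ : ↥M) := by
      exact Submodule.orthogonalProjectionOnto_mem_subspace_eq_self (⟨T x, hmem⟩ : ↥M)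
    have h2 : (⟨T x, hmem⟩ : ↥M) = e ⟨T x, LinearMap.mem_range_self Tl x⟩ := rfl
    simp only [hW, ContinuousLinearMap.comp_apply]
    rw [h1, h2, ContinuousLinearMap.extend_eq _ h_dense h_e]
    show V₀ _ = Ka x
    exact hV₀_apply x
  refine ⟨ContinuousLinearMap.adjoint W, ?_⟩
  have := congrArg ContinuousLinearMap.adjoint hWT
  rw [ContinuousLinearMap.adjoint_comp, hT, hKa, ContinuousLinearMap.adjoint_adjoint] at this
  exact this.symm


/-- `(Φ, Ψ)` is a bi-`g`-frame (i.e. a `K`-bi-`g`-frame with `K` the identity) with bounds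
`A`, `B`. -/
def IsBiGFrame {ι : Type*} {H : Type*} [NormedAddCommGroup H] [InnerProductSpace ℂ H]
    [CompleteSpace H] {G : ι → Type*} [∀ i, NormedAddCommGroup (G i)]
    [∀ i, InnerProductSpace ℂ (G i)] [∀ i, CompleteSpace (G i)]
    (Φ Ψ : ∀ i, H →L[ℂ] G i) (A B : ℝ) : Prop :=
  ∀ x : H, ∃ S : ℝ,
    HasSum (fun i => (inner ℂ (Φ i x) (Ψ i x) : ℂ)) (S : ℂ) ∧
    A * ‖x‖ ^ 2 ≤ S ∧ S ≤ B * ‖x‖ ^ 2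

/-- **Theorem 3.13.** Let `(Φ, Ψ)` be a bi-`g`-frame for `H` with positive bi-`g`-frame
operator `S` (so `⟪Sx, x⟫ = ∑ i, ⟪Φ i x, Ψ i x⟫` for all `x`), and let `T = S^{1/2}` be its
positive square root (in particular `T* = T`).  Then `(Φ, Ψ)` is a `K`-bi-`g`-frame for `H`
if and only if `K = S^{1/2} U` for some bounded operator `U` on `H`. -/
theorem isKBiGFrame_iff_eq_sqrt_comp {ι : Type*} [Countable ι] {H : Type*}
    [NormedAddCommGroup H] [InnerProductSpace ℂ H] [CompleteSpace H] {G : ι → Type*}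
    [∀ i, NormedAddCommGroup (G i)] [∀ i, InnerProductSpace ℂ (G i)] [∀ i, CompleteSpace (G i)]
    (K : H →L[ℂ] H) (Φ Ψ : ∀ i, H →L[ℂ] G i) (S T : H →L[ℂ] H)
    (hbi : ∃ A B : ℝ, 0 < A ∧ A ≤ B ∧ IsBiGFrame Φ Ψ A B)
    (hS : ∀ x : H, HasSum (fun i => (inner ℂ (Φ i x) (Ψ i x) : ℂ)) (inner ℂ (S x) x))
    (hSpos : S.IsPositive) (hTpos : T.IsPositive) (hTT : T ∘L T = S) :
    (∃ A B : ℝ, 0 < A ∧ A ≤ B ∧ IsKBiGFrame K Φ Ψ A B) ↔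
      ∃ U : H →L[ℂ] H, K = T ∘L U := by
  have hT : ContinuousLinearMap.adjoint T = T := hTpos.isSelfAdjoint
  have hkey : ∀ x : H, (inner ℂ (S x) x : ℂ) = ((‖T x‖ ^ 2 : ℝ) : ℂ) := by
    intro x
    rw [← hTT, ContinuousLinearMap.comp_apply, ← hT,
      ContinuousLinearMap.adjoint_inner_left, hT, inner_self_eq_norm_sq_to_K]
    norm_cast
  constructor
  · rintro ⟨A, B, hA, hAB, hframe⟩
    refine douglas_factor K T hT (Real.sqrt A⁻¹) fun x => ?_
    obtain ⟨Sx, hsum, hlow, hup⟩ := hframe x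
    have h1 : (Sx : ℂ) = ((‖T x‖ ^ 2 : ℝ) : ℂ) := hsum.unique (hkey x ▸ hS x)
    have h2 : Sx = ‖T x‖ ^ 2 := by exact_mod_cast h1
    rw [h2] at hlow
    have h3 : ‖ContinuousLinearMap.adjoint K x‖ ^ 2 ≤ (Real.sqrt A⁻¹ * ‖T x‖) ^ 2 := by
      have hs : (Real.sqrt A⁻¹) ^ 2 = A⁻¹ := Real.sq_sqrt (by positivity)
      rw [mul_pow, hs]
      calc ‖ContinuousLinearMap.adjoint K x‖ ^ 2
          = A⁻¹ * (A * ‖ContinuousLinearMap.adjoint K x‖ ^ 2) := by field_simp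
        _ ≤ A⁻¹ * ‖T x‖ ^ 2 :=
            mul_le_mul_of_nonneg_left hlow (inv_nonneg.mpr hA.le)
    have h4 := Real.sqrt_le_sqrt h3
    rwa [Real.sqrt_sq (norm_nonneg _), Real.sqrt_sq (by positivity)] at h4
  · rintro ⟨U, rfl⟩
    obtain ⟨A, B, hA, hAB, hbiframe⟩ := hbi
    set c : ℝ := ‖ContinuousLinearMap.adjoint U‖ with hc
    have hcpos : (0:ℝ) < c ^ 2 + 1 := by positivity
    refine ⟨(c ^ 2 + 1)⁻¹, B + (c ^ 2 + 1)⁻¹, by positivity, by nlinarith, fun x => ?_⟩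
    refine ⟨‖T x‖ ^ 2, hkey x ▸ hS x, ?_, ?_⟩
    · have h1 : ‖ContinuousLinearMap.adjoint (T ∘L U) x‖ ≤ c * ‖T x‖ := by
        rw [ContinuousLinearMap.adjoint_comp]
        calc ‖(ContinuousLinearMap.adjoint U) ((ContinuousLinearMap.adjoint T) x)‖
            ≤ c * ‖ContinuousLinearMap.adjoint T x‖ :=
              (ContinuousLinearMap.adjoint U).le_opNorm _
          _ = c * ‖T x‖ := by rw [hT]
      rw [inv_mul_le_iff₀ hcpos]
      nlinarith [norm_nonneg (ContinuousLinearMap.adjoint (T ∘L U) x), norm_nonneg (T x),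
        sq_nonneg (‖T x‖)]
    · obtain ⟨Sx, hsum, _, hup⟩ := hbiframe x
      have h1 : (Sx : ℂ) = ((‖T x‖ ^ 2 : ℝ) : ℂ) := hsum.unique (hkey x ▸ hS x)
      have h2 : Sx = ‖T x‖ ^ 2 := by exact_mod_cast h1
      rw [h2] at hup
      have hi : (0:ℝ) < (c ^ 2 + 1)⁻¹ := inv_pos.mpr hcpos
      nlinarith [mul_nonneg hi.le (sq_nonneg (‖x‖))]


end
end

section
/- Let (Φ, Ψ) be a K-bi-g-frame for H with bounds A, B, where K ∈ B(H), and let T ∈ B(H) with range(T) ⊆ range(K). Then (Φ, Ψ) is a T-bi-g-frame for H; more precisely, there exists α > 0 with TT* ≤ α²KK*, and (Φ, Ψ) is a T-bi-g-frame with lower bound A/α² and upper bound B. -/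
/-!
`(Φ, Ψ)` is a `K`-bi-`g`-frame for a complex Hilbert space `H` (with respect to a family
of complex Hilbert spaces `G i`) with bounds `0 < A ≤ B` if for every `x ∈ H` the series
`∑ i, ⟪Φ i x, Ψ i x⟫` converges to a real number `S` with `A‖K*x‖² ≤ S ≤ B‖x‖²`.
-/

noncomputable section

open scoped ComplexOrder

open Filter Topology

lemma douglas_factor_s9 {H : Type*} [NormedAddCommGroup H] [InnerProductSpace ℂ H]
    [CompleteSpace H] (K T : H →L[ℂ] H)
    (hrange : Set.range (⇑T) ⊆ Set.range (⇑K)) :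
    ∃ C : H →L[ℂ] H, K.comp C = T := by
  set N : Submodule ℂ H := K.ker with hN
  haveI : CompleteSpace N := (ContinuousLinearMap.isClosed_ker K).completeSpace_coe
  have hz : ∀ x : H, ∃ z : H, K z = T x := fun x => hrange ⟨x, rfl⟩
  set f : H → H := fun x =>
    (Classical.choose (hz x)) - (N.orthogonalProjectionOnto (Classical.choose (hz x)) : H) with hf
  have hfK : ∀ x, K (f x) = T x := by
    intro x
    have h1 : K ((N.orthogonalProjectionOnto (Classical.choose (hz x)) : H)) = 0 :=
      (Submodule.coe_mem (N.orthogonalProjectionOnto (Classical.choose (hz x))) : _)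
    simp only [hf, map_sub, h1, sub_zero, Classical.choose_spec (hz x)]
  have hfmem : ∀ x, f x ∈ Nᗮ := fun x => Submodule.sub_starProjection_mem_orthogonal _
  have huniq : ∀ x (y : H), y ∈ Nᗮ → K y = T x → y = f x := by
    intro x y hy hKy
    have hmem : y - f x ∈ N := by
      simp only [hN, LinearMap.mem_ker, ContinuousLinearMap.coe_coe, map_sub, hKy, hfK x,
        sub_self]
    have hmem' : y - f x ∈ Nᗮ := Submodule.sub_mem _ hy (hfmem x)
    have h0 : (inner ℂ (y - f x) (y - f x) : ℂ) = 0 :=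
      Submodule.inner_right_of_mem_orthogonal hmem hmem'
    rw [inner_self_eq_zero] at h0
    exact sub_eq_zero.mp h0
  set g : H →ₗ[ℂ] H :=
    { toFun := f
      map_add' := by
        intro x y
        refine (huniq (x + y) (f x + f y) (Submodule.add_mem _ (hfmem x) (hfmem y)) ?_).symm
        simp [map_add, hfK]
      map_smul' := by
        intro c x
        refine (huniq (c • x) (c • f x) (Submodule.smul_mem _ _ (hfmem x)) ?_).symm
        simp [map_smul, hfK] } with hg
  have hcl : ∀ (u : ℕ → H) (x y : H), Tendsto u atTop (𝓝 x) →
      Tendsto (g ∘ u) atTop (𝓝 y) → y = g x := by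
    intro u x y hu hgu
    have hmem : y ∈ Nᗮ := by
      have : IsClosed (Nᗮ : Set H) := N.isClosed_orthogonal
      exact this.mem_of_tendsto hgu (Filter.Eventually.of_forall fun n => hfmem (u n))
    have hKy : K y = T x := by
      have h1 : Tendsto (fun n => K (g (u n))) atTop (𝓝 (K y)) :=
        (K.continuous.tendsto y).comp hgu
      have h2 : Tendsto (fun n => T (u n)) atTop (𝓝 (T x)) :=
        (T.continuous.tendsto x).comp hu
      have heq : (fun n => K (g (u n))) = fun n => T (u n) := by
        funext n; exact hfK (u n)
      rw [heq] at h1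
      exact tendsto_nhds_unique h1 h2
    exact huniq x y hmem hKy
  refine ⟨ContinuousLinearMap.ofSeqClosedGraph hcl, ?_⟩
  ext x
  exact hfK x



/-- **Proposition 4.1.** Let `(Φ, Ψ)` be a `K`-bi-`g`-frame for `H` with bounds `A`, `B`, and
let `T ∈ B(H)` with `range T ⊆ range K`.  Then there is `α > 0` with `TT* ≤ α²KK*`, and
`(Φ, Ψ)` is a `T`-bi-`g`-frame for `H` with lower bound `A/α²` and upper bound `B`. -/
theorem isKBiGFrame_of_range_subset {ι : Type*} [Countable ι] {H : Type*}
    [NormedAddCommGroup H] [InnerProductSpace ℂ H] [CompleteSpace H] {G : ι → Type*}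
    [∀ i, NormedAddCommGroup (G i)] [∀ i, InnerProductSpace ℂ (G i)] [∀ i, CompleteSpace (G i)]
    (K T : H →L[ℂ] H) (Φ Ψ : ∀ i, H →L[ℂ] G i) (A B : ℝ)
    (hA : 0 < A) (hAB : A ≤ B) (h : IsKBiGFrame K Φ Ψ A B)
    (hrange : Set.range (⇑T) ⊆ Set.range (⇑K)) :
    ∃ α : ℝ, 0 < α ∧
      (∀ x : H, inner ℂ (T (ContinuousLinearMap.adjoint T x)) x ≤
        ((α : ℂ) ^ 2) * inner ℂ (K (ContinuousLinearMap.adjoint K x)) x) ∧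
      IsKBiGFrame T Φ Ψ (A / α ^ 2) B := by
  obtain ⟨C, hC⟩ := douglas_factor_s9 K T hrange
  set α : ℝ := ‖C‖ + 1 with hα
  have hα0 : (0:ℝ) < α := by positivity
  have hkey : ∀ x : H, ‖ContinuousLinearMap.adjoint T x‖ ≤ α * ‖ContinuousLinearMap.adjoint K x‖ := by
    intro x
    have hadj : ContinuousLinearMap.adjoint T =
        (ContinuousLinearMap.adjoint C).comp (ContinuousLinearMap.adjoint K) := by
      rw [← hC, ContinuousLinearMap.adjoint_comp]
    rw [hadj]
    calc ‖(ContinuousLinearMap.adjoint C) ((ContinuousLinearMap.adjoint K) x)‖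
        ≤ ‖ContinuousLinearMap.adjoint C‖ * ‖(ContinuousLinearMap.adjoint K) x‖ :=
          ContinuousLinearMap.le_opNorm _ _
      _ ≤ α * ‖(ContinuousLinearMap.adjoint K) x‖ := by
          have hnorm : ‖ContinuousLinearMap.adjoint C‖ = ‖C‖ :=
            (ContinuousLinearMap.adjoint (𝕜 := ℂ)).norm_map C
          rw [hnorm]
          have : ‖C‖ ≤ α := by simp [hα]
          exact mul_le_mul_of_nonneg_right this (norm_nonneg _)
  have hsq : ∀ x : H, ‖ContinuousLinearMap.adjoint T x‖ ^ 2 ≤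
      α ^ 2 * ‖ContinuousLinearMap.adjoint K x‖ ^ 2 := by
    intro x
    have := hkey x
    nlinarith [norm_nonneg (ContinuousLinearMap.adjoint T x),
      norm_nonneg (ContinuousLinearMap.adjoint K x)]
  refine ⟨α, hα0, ?_, ?_⟩
  · intro x
    have hT : (inner ℂ (T (ContinuousLinearMap.adjoint T x)) x : ℂ) =
        ((‖ContinuousLinearMap.adjoint T x‖ ^ 2 : ℝ) : ℂ) := by
      rw [← ContinuousLinearMap.adjoint_inner_right T, inner_self_eq_norm_sq_to_K]
      norm_cast
    have hK : (inner ℂ (K (ContinuousLinearMap.adjoint K x)) x : ℂ) =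
        ((‖ContinuousLinearMap.adjoint K x‖ ^ 2 : ℝ) : ℂ) := by
      rw [← ContinuousLinearMap.adjoint_inner_right K, inner_self_eq_norm_sq_to_K]
      norm_cast
    rw [hT, hK]
    have : ((α:ℂ) ^ 2) * ((‖ContinuousLinearMap.adjoint K x‖ ^ 2 : ℝ) : ℂ) =
        (((α ^ 2 * ‖ContinuousLinearMap.adjoint K x‖ ^ 2 : ℝ)) : ℂ) := by
      push_cast; ring
    rw [this]
    exact_mod_cast Complex.real_le_real.mpr (hsq x)
  · intro x
    obtain ⟨S, hSum, hlow, hhigh⟩ := h x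
    refine ⟨S, hSum, ?_, hhigh⟩
    have h1 : A / α ^ 2 * ‖ContinuousLinearMap.adjoint T x‖ ^ 2 ≤
        A / α ^ 2 * (α ^ 2 * ‖ContinuousLinearMap.adjoint K x‖ ^ 2) := by
      apply mul_le_mul_of_nonneg_left (hsq x)
      positivity
    have h2 : A / α ^ 2 * (α ^ 2 * ‖ContinuousLinearMap.adjoint K x‖ ^ 2) =
        A * ‖ContinuousLinearMap.adjoint K x‖ ^ 2 := by
      field_simp
    linarith

end
end

section
/- Let K ∈ B(H) and let (Φ, Ψ) be a K-bi-g-frame for H with bounds A, B. Let M ∈ B(H) have closed range, satisfy MK = KM, and suppose range(K*) ⊆ range(M). Then the pair ({Φ_i ∘ M*}_{i∈I}, {Ψ_i ∘ M*}_{i∈I}) is a K-bi-g-frame for H, with lower bound A‖M⁺‖⁻² (where M⁺ is the pseudo-inverse of M) and upper bound B‖M‖². -/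
/-!
`(Φ, Ψ)` is a `K`-bi-`g`-frame for a complex Hilbert space `H` (with respect to a family
of complex Hilbert spaces `G i`) with bounds `0 < A ≤ B` if for every `x ∈ H` the series
`∑ i, ⟪Φ i x, Ψ i x⟫` converges to a real number `S` with `A‖K*x‖² ≤ S ≤ B‖x‖²`.
-/

noncomputable section

/-- **Theorem 4.3.** Let `(Φ, Ψ)` be a `K`-bi-`g`-frame for `H` with bounds `A`, `B`, and let
`M ∈ B(H)` have closed range, commute with `K`, and satisfy `range K* ⊆ range M`.  Let `M⁺`
be the pseudo-inverse of `M`, i.e. `N(M⁺) = R(M)ᗮ`, `R(M⁺) = N(M)ᗮ` and `M M⁺ x = x` for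
`x ∈ R(M)`.  Then `({Φ i ∘ M*}, {Ψ i ∘ M*})` is a `K`-bi-`g`-frame for `H` with lower bound
`A‖M⁺‖⁻²` and upper bound `B‖M‖²`. -/
theorem isKBiGFrame_comp_adjoint {ι : Type*} [Countable ι] {H : Type*}
    [NormedAddCommGroup H] [InnerProductSpace ℂ H] [CompleteSpace H] {G : ι → Type*}
    [∀ i, NormedAddCommGroup (G i)] [∀ i, InnerProductSpace ℂ (G i)] [∀ i, CompleteSpace (G i)]
    (K M Mdag : H →L[ℂ] H) (Φ Ψ : ∀ i, H →L[ℂ] G i) (A B : ℝ)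
    (hA : 0 < A) (hAB : A ≤ B) (h : IsKBiGFrame K Φ Ψ A B)
    (hclosed : IsClosed (Set.range (⇑M)))
    (hcomm : M ∘L K = K ∘L M)
    (hrange : Set.range (⇑(ContinuousLinearMap.adjoint K)) ⊆ Set.range (⇑M))
    (hker : LinearMap.ker (Mdag : H →ₗ[ℂ] H) = (LinearMap.range (M : H →ₗ[ℂ] H))ᗮ)
    (hran : LinearMap.range (Mdag : H →ₗ[ℂ] H) = (LinearMap.ker (M : H →ₗ[ℂ] H))ᗮ)
    (hpinv : ∀ x ∈ LinearMap.range (M : H →ₗ[ℂ] H), M (Mdag x) = x) :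
    IsKBiGFrame K (fun i => Φ i ∘L ContinuousLinearMap.adjoint M)
      (fun i => Ψ i ∘L ContinuousLinearMap.adjoint M)
      (A * (‖Mdag‖ ^ 2)⁻¹) (B * ‖M‖ ^ 2) := by
  intro x
  obtain ⟨S, hS, hl, hu⟩ := h (ContinuousLinearMap.adjoint M x)
  refine ⟨S, hS, ?_, ?_⟩
  · -- lower bound
    set k := ContinuousLinearMap.adjoint K x with hk
    set t := ContinuousLinearMap.adjoint K (ContinuousLinearMap.adjoint M x) with ht
    have hadj : ContinuousLinearMap.adjoint K ∘L ContinuousLinearMap.adjoint M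
        = ContinuousLinearMap.adjoint M ∘L ContinuousLinearMap.adjoint K := by
      rw [← ContinuousLinearMap.adjoint_comp, ← ContinuousLinearMap.adjoint_comp, hcomm]
    have htk : t = ContinuousLinearMap.adjoint M k := by
      have := congrArg (fun (T : H →L[ℂ] H) => T x) hadj
      simpa using this
    have hkr : k ∈ LinearMap.range (M : H →ₗ[ℂ] H) := by
      rcases hrange ⟨x, rfl⟩ with ⟨y, hy⟩
      exact ⟨y, hy⟩
    have hMk : M (Mdag k) = k := hpinv k hkr
    -- key: ‖k‖^2 ≤ ‖Mdag‖ * ‖k‖ * ‖t‖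
    have hkey : ‖k‖ ^ 2 ≤ ‖Mdag‖ * ‖k‖ * ‖t‖ := by
      have h1 : (‖k‖ : ℝ) ^ 2 = RCLike.re (inner ℂ (M (Mdag k)) k : ℂ) := by
        rw [hMk]
        simp [← @inner_self_eq_norm_sq ℂ]
      have h2 : (inner ℂ (M (Mdag k)) k : ℂ)
          = inner ℂ (Mdag k) (ContinuousLinearMap.adjoint M k) := by
        rw [ContinuousLinearMap.adjoint_inner_right M (Mdag k) k]
      have h3 : RCLike.re (inner ℂ (Mdag k) (ContinuousLinearMap.adjoint M k) : ℂ)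
          ≤ ‖Mdag k‖ * ‖ContinuousLinearMap.adjoint M k‖ := by
        exact le_trans (RCLike.re_le_norm _) (norm_inner_le_norm (𝕜 := ℂ) _ _)
      have h4 : ‖Mdag k‖ ≤ ‖Mdag‖ * ‖k‖ := Mdag.le_opNorm k
      have h5 : (0 : ℝ) ≤ ‖ContinuousLinearMap.adjoint M k‖ := norm_nonneg _
      rw [h1, h2, htk]
      nlinarith [norm_nonneg (Mdag k), norm_nonneg k]
    have hkey2 : ‖k‖ ^ 2 ≤ ‖Mdag‖ ^ 2 * ‖t‖ ^ 2 := by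
      rcases eq_or_lt_of_le (norm_nonneg k) with h0 | h0
      · nlinarith [norm_nonneg t, norm_nonneg Mdag]
      · have hct : ‖k‖ ≤ ‖Mdag‖ * ‖t‖ :=
          le_of_mul_le_mul_left (by nlinarith) h0
        nlinarith [norm_nonneg t, norm_nonneg Mdag]
    rcases eq_or_lt_of_le (sq_nonneg ‖Mdag‖) with hd | hd
    · have : A * (‖Mdag‖ ^ 2)⁻¹ * ‖k‖ ^ 2 = 0 := by rw [← hd]; simp
      rw [this]
      exact le_trans (by positivity) hl
    · have h6 : (‖Mdag‖ ^ 2)⁻¹ * ‖k‖ ^ 2 ≤ ‖t‖ ^ 2 := by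
        rw [inv_mul_le_iff₀ hd]
        exact hkey2
      calc A * (‖Mdag‖ ^ 2)⁻¹ * ‖k‖ ^ 2 = A * ((‖Mdag‖ ^ 2)⁻¹ * ‖k‖ ^ 2) := by ring
        _ ≤ A * ‖t‖ ^ 2 := by nlinarith
        _ ≤ S := hl
  · -- upper bound
    have hB : (0 : ℝ) ≤ B := le_trans hA.le hAB
    have h1 : ‖ContinuousLinearMap.adjoint M x‖ ≤ ‖M‖ * ‖x‖ := by
      have := (ContinuousLinearMap.adjoint M).le_opNorm x
      rwa [LinearIsometryEquiv.norm_map ContinuousLinearMap.adjoint M] at this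
    have h2 := mul_le_mul h1 h1 (norm_nonneg _) (by positivity)
    calc S ≤ B * ‖ContinuousLinearMap.adjoint M x‖ ^ 2 := hu
      _ ≤ B * ‖M‖ ^ 2 * ‖x‖ ^ 2 := by nlinarith


end
end

section
/- Let K, M ∈ B(H) and let (Φ, Ψ) be a δ-tight K-bi-g-frame for H (δ > 0). Assume range(K*) = H and MK = KM. Then the pair ({Φ_i ∘ M*}_{i∈I}, {Ψ_i ∘ M*}_{i∈I}) is a K-bi-g-frame for H if and only if M is surjective. -/
/-!
`(Φ, Ψ)` is a `K`-bi-`g`-frame for a complex Hilbert space `H` (with respect to a family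
of complex Hilbert spaces `G i`) with bounds `0 < A ≤ B` if for every `x ∈ H` the series
`∑ i, ⟪Φ i x, Ψ i x⟫` converges to a real number `S` with `A‖K*x‖² ≤ S ≤ B‖x‖²`.
-/

noncomputable section

/-- `(Φ, Ψ)` is a tight `K`-bi-`g`-frame with bound `A` if
`∑ i, ⟪Φ i x, Ψ i x⟫ = A‖K*x‖²` for every `x`. -/
def IsTightKBiGFrame {ι : Type*} {H : Type*} [NormedAddCommGroup H] [InnerProductSpace ℂ H]
    [CompleteSpace H] {G : ι → Type*} [∀ i, NormedAddCommGroup (G i)]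
    [∀ i, InnerProductSpace ℂ (G i)] [∀ i, CompleteSpace (G i)]
    (K : H →L[ℂ] H) (Φ Ψ : ∀ i, H →L[ℂ] G i) (A : ℝ) : Prop :=
  ∀ x : H,
    HasSum (fun i => (inner ℂ (Φ i x) (Ψ i x) : ℂ))
      ((A * ‖ContinuousLinearMap.adjoint K x‖ ^ 2 : ℝ) : ℂ)

open ContinuousLinearMap

/-- If the adjoint of `M` is bounded below, then `M` is surjective. -/
lemma surjective_of_adjoint_bounded_below {H : Type*} [NormedAddCommGroup H]
    [InnerProductSpace ℂ H] [CompleteSpace H] (M : H →L[ℂ] H) {c : ℝ} (hc : 0 < c)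
    (h : ∀ y : H, c * ‖y‖ ^ 2 ≤ ‖ContinuousLinearMap.adjoint M y‖ ^ 2) :
    Function.Surjective M := by
  set Ms := ContinuousLinearMap.adjoint M with hMs
  have hunit : IsUnit (M ∘L Ms) := by
    apply isUnit_of_forall_le_norm_inner_map (c := ⟨c, hc.le⟩) _ (by exact_mod_cast hc)
    intro y
    have h1 : (inner ℂ ((M ∘L Ms) y) y : ℂ) = (inner ℂ (Ms y) (Ms y) : ℂ) := by
      rw [ContinuousLinearMap.comp_apply, hMs, ← ContinuousLinearMap.adjoint_inner_right]
    have h2 : ‖(inner ℂ (Ms y) (Ms y) : ℂ)‖ = ‖Ms y‖ ^ 2 := by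
      rw [@inner_self_eq_norm_sq_to_K ℂ]
      simp [Real.norm_eq_abs, abs_of_nonneg (norm_nonneg _), sq_abs]
    rw [h1, h2]
    calc ‖y‖ ^ 2 * (⟨c, hc.le⟩ : NNReal) = c * ‖y‖ ^ 2 := by
          simp [mul_comm]
      _ ≤ ‖Ms y‖ ^ 2 := h y
  intro y
  refine ⟨Ms ((↑hunit.unit⁻¹ : H →L[ℂ] H) y), ?_⟩
  have h6 := congrArg (fun f : H →L[ℂ] H => f y) hunit.mul_val_inv
  simpa only [ContinuousLinearMap.mul_apply, ContinuousLinearMap.one_apply,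
    ContinuousLinearMap.comp_apply] using h6

/-- **Theorem 4.4.** Let `K, M ∈ B(H)` and let `(Φ, Ψ)` be a `δ`-tight `K`-bi-`g`-frame for
`H` (`δ > 0`).  Assume `range K* = H` and `MK = KM`.  Then `({Φ i ∘ M*}, {Ψ i ∘ M*})` is a
`K`-bi-`g`-frame for `H` if and only if `M` is surjective. -/
theorem isKBiGFrame_comp_adjoint_iff_surjective {ι : Type*} [Countable ι] {H : Type*}
    [NormedAddCommGroup H] [InnerProductSpace ℂ H] [CompleteSpace H] {G : ι → Type*}
    [∀ i, NormedAddCommGroup (G i)] [∀ i, InnerProductSpace ℂ (G i)] [∀ i, CompleteSpace (G i)]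
    (K M : H →L[ℂ] H) (Φ Ψ : ∀ i, H →L[ℂ] G i) (δ : ℝ) (hδ : 0 < δ)
    (htight : IsTightKBiGFrame K Φ Ψ δ)
    (hK : LinearMap.range (ContinuousLinearMap.adjoint K).toLinearMap = ⊤)
    (hcomm : M ∘L K = K ∘L M) :
    (∃ A B : ℝ, 0 < A ∧ A ≤ B ∧
      IsKBiGFrame K (fun i => Φ i ∘L ContinuousLinearMap.adjoint M)
        (fun i => Ψ i ∘L ContinuousLinearMap.adjoint M) A B) ↔
    Function.Surjective M := by
  set Ks := ContinuousLinearMap.adjoint K with hKs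
  set Ms := ContinuousLinearMap.adjoint M with hMs
  have hcomm' : Ks ∘L Ms = Ms ∘L Ks := by
    rw [hKs, hMs, ← ContinuousLinearMap.adjoint_comp, ← ContinuousLinearMap.adjoint_comp, hcomm]
  have hswap : ∀ x : H, Ks (Ms x) = Ms (Ks x) := fun x =>
    congrArg (fun f : H →L[ℂ] H => f x) hcomm'
  constructor
  · rintro ⟨A, B, hA, hAB, hframe⟩
    -- lower bound transfers: A‖y‖² ≤ δ‖Ms y‖² for all y
    apply surjective_of_adjoint_bounded_below M (c := A / δ) (div_pos hA hδ)
    intro y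
    obtain ⟨x, hx⟩ := (LinearMap.range_eq_top.mp hK) y
    replace hx : Ks x = y := hx
    obtain ⟨S, hS, hlow, _⟩ := hframe x
    have hS' := htight (Ms x)
    have hSeq : S = δ * ‖Ks (Ms x)‖ ^ 2 := by
      have := hS.unique hS'
      exact_mod_cast this
    rw [div_mul_eq_mul_div, div_le_iff₀ hδ]
    calc A * ‖y‖ ^ 2 = A * ‖Ks x‖ ^ 2 := by rw [hx]
      _ ≤ S := hlow
      _ = δ * ‖Ks (Ms x)‖ ^ 2 := hSeq
      _ = δ * ‖Ms y‖ ^ 2 := by rw [hswap, hx]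
      _ = ‖Ms y‖ ^ 2 * δ := mul_comm _ _
  · intro hsurj
    obtain ⟨C, hCpos, hC⟩ := ContinuousLinearMap.exists_preimage_norm_le M hsurj
    have hbelow : ∀ y : H, ‖y‖ ≤ C * ‖Ms y‖ := by
      intro y
      obtain ⟨x, hx, hxn⟩ := hC y
      by_cases hy : y = 0
      · simp [hy]
      have h1 : (‖y‖ : ℝ) ^ 2 = RCLike.re (inner ℂ y y : ℂ) :=
        (inner_self_eq_norm_sq (𝕜 := ℂ) y).symm
      have h2 : (inner ℂ y y : ℂ) = (inner ℂ x (Ms y) : ℂ) := by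
        rw [← hx, hMs, ContinuousLinearMap.adjoint_inner_right]
      have h3 : ‖y‖ ^ 2 ≤ ‖x‖ * ‖Ms y‖ := by
        rw [h1, h2]
        calc RCLike.re (inner ℂ x (Ms y) : ℂ) ≤ ‖(inner ℂ x (Ms y) : ℂ)‖ := RCLike.re_le_norm _
          _ ≤ ‖x‖ * ‖Ms y‖ := norm_inner_le_norm _ _
      have h4 : ‖y‖ ^ 2 ≤ C * ‖y‖ * ‖Ms y‖ :=
        h3.trans (by
          have := mul_le_mul_of_nonneg_right hxn (norm_nonneg (Ms y))
          linarith)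
      have hy' : 0 < ‖y‖ := norm_pos_iff.mpr hy
      nlinarith
    refine ⟨δ / C ^ 2, δ / C ^ 2 + δ * (‖K‖ * ‖M‖) ^ 2, div_pos hδ (by positivity),
      le_add_of_nonneg_right (by positivity), ?_⟩
    intro x
    refine ⟨δ * ‖Ks (Ms x)‖ ^ 2, ?_, ?_, ?_⟩
    · exact_mod_cast htight (Ms x)
    · rw [div_mul_eq_mul_div, div_le_iff₀ (by positivity)]
      have h1 : ‖Ks x‖ ≤ C * ‖Ms (Ks x)‖ := hbelow (Ks x)
      have h2 : ‖Ks (Ms x)‖ = ‖Ms (Ks x)‖ := by rw [hswap]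
      rw [h2]
      nlinarith [mul_le_mul h1 h1 (norm_nonneg (Ks x))
        (mul_nonneg hCpos.le (norm_nonneg (Ms (Ks x)))), hδ.le, sq_nonneg ‖Ks x‖]
    · have h1 : ‖Ks (Ms x)‖ ≤ ‖K‖ * (‖M‖ * ‖x‖) := by
        calc ‖Ks (Ms x)‖ ≤ ‖Ks‖ * ‖Ms x‖ := ContinuousLinearMap.le_opNorm _ _
          _ ≤ ‖Ks‖ * (‖Ms‖ * ‖x‖) := by
              have := ContinuousLinearMap.le_opNorm Ms x
              exact mul_le_mul_of_nonneg_left this (norm_nonneg _)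
          _ = ‖K‖ * (‖M‖ * ‖x‖) := by
              rw [hKs, hMs, LinearIsometryEquiv.norm_map ContinuousLinearMap.adjoint K,
                LinearIsometryEquiv.norm_map ContinuousLinearMap.adjoint M]
      have h2 : δ * ‖Ks (Ms x)‖ ^ 2 ≤ δ * (‖K‖ * ‖M‖) ^ 2 * ‖x‖ ^ 2 := by
        nlinarith [mul_le_mul h1 h1 (norm_nonneg (Ks (Ms x))) (by positivity), hδ.le]
      nlinarith [norm_nonneg x, hδ.le, sq_nonneg ‖x‖, div_pos hδ (show (0:ℝ) < C ^ 2 by positivity)]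

end
end
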